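/- For every integer ℓ ≥ 3, a finite simple graph G contains P_ℓ as a contraction if and only if G has a P_ℓ-suitable pair, i.e., a pair of vertices (u, v) of G for which G has a P_ℓ-witness structure W with W(p_1) = {u} and W(p_ℓ) = {v}. -/

import Mathlib

/-- `W` is an `H`-witness structure of `G`: a family of pairwise disjoint nonempty
connected subsets of `V(G)` covering `V(G)` such that distinct `h₁ h₂` are adjacent in `H`
iff there is an edge of `G` between `W h₁` and `W h₂`. -/
def IsWitnessStructure {V U : Type*} (G : SimpleGraph V) (H : SimpleGraph U)
    (W : U → Set V) : Prop :=
  (∀ h, (W h).Nonempty) ∧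
  (∀ h₁ h₂, h₁ ≠ h₂ → Disjoint (W h₁) (W h₂)) ∧
  (⋃ h, W h) = Set.univ ∧
  (∀ h, (G.induce (W h)).Connected) ∧
  (∀ h₁ h₂, h₁ ≠ h₂ → ((∃ a ∈ W h₁, ∃ b ∈ W h₂, G.Adj a b) ↔ H.Adj h₁ h₂))

/-- `G` contains `H` as a contraction. -/
def ContainsAsContraction {V U : Type*} (G : SimpleGraph V) (H : SimpleGraph U) : Prop :=
  ∃ W : U → Set V, IsWitnessStructure G H W

/-! Shrinking an end bag of a `P_ℓ`-witness structure to one vertex: pick `u ∈ W(p₁)` that is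
not a cut vertex of `G[W(p₁)]` (a leaf of a spanning tree; there are two, so one avoids a vertex
`a` with a neighbour in `W(p₂)`), and move `W(p₁) \ {u}` into `W(p₂)`, to which it stays attached
through `a`. As `p₁` is a leaf of `P_ℓ`, no adjacency between bags changes. Doing the same at
`p_ℓ` does not touch `W(p₁)` when `ℓ ≥ 3`. -/

open SimpleGraph

namespace SimpleGraph

variable {V : Type*} {G : SimpleGraph V}

lemma Connected.exists_ne_connected_induce_compl_singleton [Finite V] [Nontrivial V]
    (hG : G.Connected) (a : V) : ∃ v, v ≠ a ∧ (G.induce {v}ᶜ).Connected := by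
  obtain ⟨T, hTG, hT⟩ := hG.exists_isTree_le
  have := Fintype.ofFinite V
  classical
  obtain ⟨u, v, huv, hu, hv⟩ := hT.exists_ne_and_degree_eq_one
  have hleaf {w : V} (hw : T.degree w = 1) : (G.induce {w}ᶜ).Connected :=
    (hT.connected.induce_compl_singleton_of_degree_eq_one hw).mono fun _ _ h => hTG h
  by_cases hua : u = a
  · exact ⟨v, fun hva => huv (hua.trans hva.symm), hleaf hv⟩
  · exact ⟨u, hua, hleaf hu⟩

lemma exists_ne_connected_induce_sdiff_singleton [Finite V] {s : Set V}
    (hs : (G.induce s).Connected) (hnt : s.Nontrivial) {a : V} (ha : a ∈ s) :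
    ∃ u ∈ s, u ≠ a ∧ (G.induce (s \ {u})).Connected := by
  have : Nontrivial s := hnt.coe_sort
  obtain ⟨u, hua, hu⟩ := hs.exists_ne_connected_induce_compl_singleton ⟨a, ha⟩
  refine ⟨u, u.2, fun h => hua (Subtype.ext h), hu.map ?_ ?_⟩
  · exact ⟨fun x => ⟨x.1, x.1.2, fun h => x.2 (Subtype.ext h)⟩, fun h => h⟩
  · rintro ⟨x, hxs, hxu⟩
    exact ⟨⟨⟨x, hxs⟩, fun h => hxu (congrArg Subtype.val h)⟩, rfl⟩

lemma Connected.exists_adj_sdiff_singleton {s : Set V} (hs : (G.induce s).Connected)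
    (hnt : s.Nontrivial) {u : V} (hu : u ∈ s) : ∃ w ∈ s \ {u}, G.Adj u w := by
  have : Nontrivial s := hnt.coe_sort
  obtain ⟨w, huw⟩ := hs.preconnected.exists_adj_of_nontrivial ⟨u, hu⟩
  exact ⟨w, ⟨w.2, fun h => huw.ne (Subtype.ext h.symm)⟩, huw⟩

lemma pathGraph_adj_mk_zero_iff {n : ℕ} (hn : 1 < n) (j : Fin n) :
    (pathGraph n).Adj ⟨0, by omega⟩ j ↔ j = ⟨1, hn⟩ := by
  simp only [pathGraph_adj, Fin.ext_iff]
  omega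

lemma pathGraph_adj_mk_sub_one_iff {n : ℕ} (hn : 1 < n) (j : Fin n) :
    (pathGraph n).Adj ⟨n - 1, by omega⟩ j ↔ j = ⟨n - 2, by omega⟩ := by
  simp only [pathGraph_adj, Fin.ext_iff]
  omega

end SimpleGraph

namespace IsWitnessStructure

variable {V U : Type*} {G : SimpleGraph V} {H : SimpleGraph U} {W : U → Set V}

lemma nonempty (hW : IsWitnessStructure G H W) (h : U) : (W h).Nonempty := hW.1 h

lemma disjoint (hW : IsWitnessStructure G H W) {h h' : U} (hne : h ≠ h') :
    Disjoint (W h) (W h') :=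
  hW.2.1 h h' hne

lemma connected_induce (hW : IsWitnessStructure G H W) (h : U) : (G.induce (W h)).Connected :=
  hW.2.2.2.1 h

lemma exists_adj_iff (hW : IsWitnessStructure G H W) {h h' : U} (hne : h ≠ h') :
    (∃ a ∈ W h, ∃ b ∈ W h', G.Adj a b) ↔ H.Adj h h' :=
  hW.2.2.2.2 h h' hne

lemma eq_of_mem (hW : IsWitnessStructure G H W) {v : V} {h h' : U} (hv : v ∈ W h)
    (hv' : v ∈ W h') : h = h' :=
  by_contra fun hne => Set.disjoint_left.mp (hW.disjoint hne) hv hv'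

lemma adj_of_adj (hW : IsWitnessStructure G H W) {a b : V} {h h' : U} (ha : a ∈ W h)
    (hb : b ∈ W h') (hab : G.Adj a b) (hne : h ≠ h') : H.Adj h h' :=
  (hW.exists_adj_iff hne).mp ⟨a, ha, b, hb, hab⟩

lemma eq_or_eq_of_adj_of_leaf (hW : IsWitnessStructure G H W) {h₀ h₁ h : U}
    (hleaf : ∀ h, H.Adj h₀ h ↔ h = h₁) {a b : V} (ha : a ∈ W h₀) (hb : b ∈ W h)
    (hab : G.Adj a b) : h = h₀ ∨ h = h₁ :=
  or_iff_not_imp_left.mpr fun hne => (hleaf h).mp (hW.adj_of_adj ha hb hab (Ne.symm hne))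

lemma exists_mem (hW : IsWitnessStructure G H W) (v : V) : ∃ h, v ∈ W h :=
  Set.mem_iUnion.mp (hW.2.2.1 ▸ Set.mem_univ v)

end IsWitnessStructure

def moveToBag {V U : Type*} [DecidableEq U] (W : U → Set V) (S : Set V) (h₁ : U) :
    U → Set V :=
  fun h => if h = h₁ then W h ∪ S else W h \ S

section moveToBag

variable {V U : Type*} [DecidableEq U] {W : U → Set V} {S : Set V} {h h₁ : U} {v : V}

lemma mem_moveToBag : v ∈ moveToBag W S h₁ h ↔ v ∈ S ∧ h = h₁ ∨ v ∉ S ∧ v ∈ W h := by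
  unfold moveToBag
  split_ifs with hh <;> simp only [Set.mem_union, Set.mem_sdiff, hh] <;> tauto

lemma moveToBag_of_ne (hh : h ≠ h₁) : moveToBag W S h₁ h = W h \ S := if_neg hh

lemma moveToBag_self : moveToBag W S h₁ h₁ = W h₁ ∪ S := if_pos rfl

end moveToBag

namespace IsWitnessStructure

variable {V U : Type*} [DecidableEq U] {G : SimpleGraph V} {H : SimpleGraph U} {W : U → Set V}

lemma moveToBag_of_ne_of_ne {h h₀ h₁ : U} {S : Set V}
    (hW : IsWitnessStructure G H W) (hS : S ⊆ W h₀) (h0 : h ≠ h₀) (h1 : h ≠ h₁) :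
    moveToBag W S h₁ h = W h := by
  rw [moveToBag_of_ne h1, sdiff_eq_left]
  exact Set.disjoint_of_subset_right hS (hW.disjoint h0)

lemma exists_adj_moveToBag_iff_of_leaf {h₀ h₁ h h' : U} {S : Set V}
    (hW : IsWitnessStructure G H W) (hleaf : ∀ h, H.Adj h₀ h ↔ h = h₁) (hS : S ⊆ W h₀)
    (hadj : ∃ a ∈ W h₀ \ S, ∃ b ∈ W h₁ ∪ S, G.Adj a b) (hne : h ≠ h') :
    (∃ a ∈ moveToBag W S h₁ h, ∃ b ∈ moveToBag W S h₁ h', G.Adj a b) ↔ H.Adj h h' := by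
  have h₀₁ : h₀ ≠ h₁ := ((hleaf h₁).mpr rfl).ne
  have hedge₀₁ := hadj
  rw [← moveToBag_of_ne h₀₁, ← moveToBag_self] at hedge₀₁
  constructor
  · rintro ⟨a, ha, b, hb, hab⟩
    rw [mem_moveToBag] at ha hb
    rcases ha with ⟨haS, rfl⟩ | ⟨-, ha⟩ <;> rcases hb with ⟨hbS, rfl⟩ | ⟨-, hb⟩
    · exact absurd rfl hne
    · obtain rfl : h' = h₀ := (hW.eq_or_eq_of_adj_of_leaf hleaf (hS haS) hb hab).resolve_right
        (Ne.symm hne)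
      exact ((hleaf h).mpr rfl).symm
    · obtain rfl : h = h₀ := (hW.eq_or_eq_of_adj_of_leaf hleaf (hS hbS) ha hab.symm).resolve_right
        hne
      exact (hleaf h').mpr rfl
    · exact hW.adj_of_adj ha hb hab hne
  · intro hhh'
    obtain ⟨a, ha, b, hb, hab⟩ := (hW.exists_adj_iff hne).mpr hhh'
    by_cases haS : a ∈ S
    · obtain rfl := hW.eq_of_mem ha (hS haS)
      obtain rfl := (hleaf h').mp hhh'
      exact hedge₀₁
    by_cases hbS : b ∈ S
    · obtain rfl := hW.eq_of_mem hb (hS hbS)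
      obtain rfl := (hleaf h).mp hhh'.symm
      obtain ⟨a, ha, b, hb, hab⟩ := hedge₀₁
      exact ⟨b, hb, a, ha, hab.symm⟩
    · exact ⟨a, mem_moveToBag.mpr (Or.inr ⟨haS, ha⟩), b, mem_moveToBag.mpr (Or.inr ⟨hbS, hb⟩),
        hab⟩

lemma moveToBag_of_leaf {h₀ h₁ : U} {S : Set V} (hW : IsWitnessStructure G H W)
    (hleaf : ∀ h, H.Adj h₀ h ↔ h = h₁) (hS : S ⊆ W h₀)
    (hconn₀ : (G.induce (W h₀ \ S)).Connected) (hconn₁ : (G.induce (W h₁ ∪ S)).Connected)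
    (hadj : ∃ a ∈ W h₀ \ S, ∃ b ∈ W h₁ ∪ S, G.Adj a b) :
    IsWitnessStructure G H (moveToBag W S h₁) := by
  have h₀₁ : h₀ ≠ h₁ := ((hleaf h₁).mpr rfl).ne
  refine ⟨fun h => ?_, fun h h' hne => ?_, ?_, fun h => ?_, fun h h' hne => ?_⟩
  · by_cases h1 : h = h₁
    · subst h1
      rw [moveToBag_self]
      exact (hW.nonempty h).mono Set.subset_union_left
    by_cases h0 : h = h₀
    · subst h0
      rw [moveToBag_of_ne h1]
      exact Set.nonempty_coe_sort.mp hconn₀.nonempty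
    · rw [hW.moveToBag_of_ne_of_ne hS h0 h1]
      exact hW.nonempty h
  · refine Set.disjoint_left.mpr fun v hv hv' => hne ?_
    rw [mem_moveToBag] at hv hv'
    rcases hv with ⟨hvS, rfl⟩ | ⟨hvS, hv⟩ <;> rcases hv' with ⟨hvS', rfl⟩ | ⟨hvS', hv'⟩
    exacts [rfl, (hvS' hvS).elim, (hvS hvS').elim, hW.eq_of_mem hv hv']
  · refine Set.eq_univ_of_forall fun v => Set.mem_iUnion.mpr ?_
    by_cases hvS : v ∈ S
    · exact ⟨h₁, mem_moveToBag.mpr (Or.inl ⟨hvS, rfl⟩)⟩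
    · obtain ⟨h, hv⟩ := hW.exists_mem v
      exact ⟨h, mem_moveToBag.mpr (Or.inr ⟨hvS, hv⟩)⟩
  · by_cases h1 : h = h₁
    · subst h1
      rwa [moveToBag_self]
    by_cases h0 : h = h₀
    · subst h0
      rwa [moveToBag_of_ne h1]
    · rw [hW.moveToBag_of_ne_of_ne hS h0 h1]
      exact hW.connected_induce h
  · exact hW.exists_adj_moveToBag_iff_of_leaf hleaf hS hadj hne

lemma exists_eq_singleton_of_leaf [Finite V] {h₀ h₁ : U}
    (hW : IsWitnessStructure G H W) (hleaf : ∀ h, H.Adj h₀ h ↔ h = h₁) :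
    ∃ (u : V) (W' : U → Set V), IsWitnessStructure G H W' ∧ W' h₀ = {u} ∧
      ∀ h, h ≠ h₀ → h ≠ h₁ → W' h = W h := by
  have h₀₁ : h₀ ≠ h₁ := ((hleaf h₁).mpr rfl).ne
  obtain ⟨a, ha, b, hb, hab⟩ := (hW.exists_adj_iff h₀₁).mpr ((hleaf h₁).mpr rfl)
  rcases (W h₀).subsingleton_or_nontrivial with hsub | hnt
  · exact ⟨a, W, hW, hsub.eq_singleton_of_mem ha, fun _ _ _ => rfl⟩
  obtain ⟨u, hu, hua, hconn⟩ := exists_ne_connected_induce_sdiff_singleton (hW.connected_induce h₀) hnt ha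
  obtain ⟨w, hw, huw⟩ := (hW.connected_induce h₀).exists_adj_sdiff_singleton hnt hu
  have hrest : W h₀ \ (W h₀ \ {u}) = {u} :=
    Set.sdiff_sdiff_cancel_left (Set.singleton_subset_iff.mpr hu)
  refine ⟨u, moveToBag W (W h₀ \ {u}) h₁,
    hW.moveToBag_of_leaf hleaf Set.sdiff_subset ?_ ?_ ?_, by rw [moveToBag_of_ne h₀₁, hrest],
    fun h h0 h1 => hW.moveToBag_of_ne_of_ne Set.sdiff_subset h0 h1⟩
  · rw [hrest]
    exact (connected_iff _).mpr ⟨Preconnected.of_subsingleton, ⟨⟨u, rfl⟩⟩⟩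
  · exact connected_induce_union (hW.connected_induce h₁).preconnected hconn.preconnected hb
      ⟨ha, hua.symm⟩ hab.symm
  · exact ⟨u, by rw [hrest]; rfl, w, Or.inr hw, huw⟩

end IsWitnessStructure

theorem stmt_1 {V : Type} [Fintype V] (G : SimpleGraph V) (ℓ : ℕ) (hℓ : 3 ≤ ℓ) :
    ContainsAsContraction G (SimpleGraph.pathGraph ℓ) ↔
      ∃ u v : V, ∃ W : Fin ℓ → Set V,
        IsWitnessStructure G (SimpleGraph.pathGraph ℓ) W ∧
        W ⟨0, by omega⟩ = {u} ∧ W ⟨ℓ - 1, by omega⟩ = {v} := by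
  refine ⟨fun ⟨W, hW⟩ => ?_, fun ⟨_, _, W, hW, _⟩ => ⟨W, hW⟩⟩
  obtain ⟨u, W₁, hW₁, hu, -⟩ :=
    hW.exists_eq_singleton_of_leaf (pathGraph_adj_mk_zero_iff (by omega))
  obtain ⟨v, W₂, hW₂, hv, hW₂₁⟩ :=
    hW₁.exists_eq_singleton_of_leaf (pathGraph_adj_mk_sub_one_iff (by omega))
  refine ⟨u, v, W₂, hW₂, ?_, hv⟩
  rw [hW₂₁ _ (by simp only [ne_eq, Fin.ext_iff]; omega)
    (by simp only [ne_eq, Fin.ext_iff]; omega), hu]
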